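/- Exact log-likelihood decomposition: for any ω ∈ Ω^(n), −log P_Φ^(n+m)↓[n](ω) = −log P_Φ^(n)(ω) + log(Z(n+m)/(Z(n)·Z(m)·C_{n,m})) − log( (1/(C_{n,m} Z(m))) ∑_{ω': ω'↓[n]=ω} w(ω')/w(ω) ), and the middle term lies in [log M_min, log M_max] while the last log's argument lies in [M_min, M_max]. -/

import Mathlib

open scoped BigOperators

structure Vocab where
  Rel : Type
  [fintypeRel : Fintype Rel]
  [decEqRel : DecidableEq Rel]
  ar : Rel → ℕ

attribute [instance] Vocab.fintypeRel Vocab.decEqRel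

def Interp (V : Vocab) (D : Type) : Type :=
  (r : V.Rel) → (Fin (V.ar r) → D) → Bool

noncomputable instance (V : Vocab) (D : Type) [Fintype D] [DecidableEq D] :
    Fintype (Interp V D) := by
  unfold Interp; infer_instance

noncomputable instance (V : Vocab) (D : Type) : DecidableEq (Interp V D) :=
  Classical.decEq _

def restrict {V : Vocab} {D E : Type} (f : E → D) (ω : Interp V D) : Interp V E :=
  fun r t => ω r (f ∘ t)

structure Formula (V : Vocab) where
  arity : ℕ
  sat : Interp V (Fin arity) → Bool

structure MLN (V : Vocab) where
  formulas : List (Formula V × ℝ)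

noncomputable def nGround {V : Vocab} {D : Type} [Fintype D] [DecidableEq D]
    (φ : Formula V) (ω : Interp V D) : ℕ :=
  Fintype.card {c : Fin φ.arity ↪ D // φ.sat (restrict (fun i => c i) ω) = true}

noncomputable def weight {V : Vocab} {D : Type} [Fintype D] [DecidableEq D]
    (Φ : MLN V) (ω : Interp V D) : ℝ :=
  Real.exp ((Φ.formulas.map (fun p => p.2 * (nGround p.1 ω : ℝ))).sum)

noncomputable def kweight {V : Vocab} (Φ : MLN V) (k : ℕ) (ν : Interp V (Fin k)) : ℝ :=
  Real.exp (((Φ.formulas.filter (fun p => p.1.arity == k)).map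
      (fun p => p.2 * (nGround p.1 ν : ℝ))).sum)

noncomputable def downset {V : Vocab} {n k : ℕ} (ω : Interp V (Fin n))
    (s : Finset (Fin n)) (h : s.card = k) : Interp V (Fin k) :=
  restrict (fun i => ((s.orderIsoOfFin h i : Fin n))) ω

noncomputable def Zpart {V : Vocab} (Φ : MLN V) (N : ℕ) : ℝ :=
  ∑ ω : Interp V (Fin N), weight Φ ω

noncomputable def wmax {V : Vocab} (Φ : MLN V) (k : ℕ) : ℝ :=
  ⨆ ν : Interp V (Fin k), kweight Φ k ν

noncomputable def wmin {V : Vocab} (Φ : MLN V) (k : ℕ) : ℝ :=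
  ⨅ ν : Interp V (Fin k), kweight Φ k ν

def exponent (n m k : ℕ) : ℕ := (n + m).choose k - n.choose k - m.choose k

noncomputable def Mmax {V : Vocab} (Φ : MLN V) (d n m : ℕ) : ℝ :=
  ∏ k ∈ Finset.Icc 1 d, (wmax Φ k) ^ (exponent n m k)

noncomputable def Mmin {V : Vocab} (Φ : MLN V) (d n m : ℕ) : ℝ :=
  ∏ k ∈ Finset.Icc 1 d, (wmin Φ k) ^ (exponent n m k)

noncomputable def Pdist {V : Vocab} (Φ : MLN V) (N : ℕ) (ω : Interp V (Fin N)) : ℝ :=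
  weight Φ ω / Zpart Φ N

noncomputable def marg {V : Vocab} (Φ : MLN V) (n m : ℕ) (ω : Interp V (Fin n)) : ℝ :=
  ∑ ω' ∈ Finset.univ.filter
      (fun ω' : Interp V (Fin (n + m)) => restrict (Fin.castAdd m) ω' = ω),
    Pdist Φ (n + m) ω'

/-! The weight of a world on `Fin N` factors as a product, over the `k`-subsets `T` of `Fin N`,
of the `k`-ary weight of the world restricted to `T`: a grounding of a `k`-ary formula is an
injection `Fin k ↪ Fin N`, i.e. a permutation of `Fin k` followed by the increasing enumeration
of its image `T`. For a world on `Fin (n + m)`, the subsets inside the first `n` points and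
inside the last `m` points reproduce the weights of the two restrictions, while the `e_k`
crossing `k`-subsets contribute a factor between `M_min` and `M_max`. Summing over the fibres of
the pair of restriction maps, each of size `C`, places the extension sum of `ω` in
`C · w(ω) · Z(m) · [M_min, M_max]` and `Z(n + m)` in `C · Z(n) · Z(m) · [M_min, M_max]`; the
decomposition itself is an identity of logarithms. -/

open Finset hiding restrict

variable {V : Vocab}

instance (D : Type) : Nonempty (Interp V D) := ⟨fun _ _ => true⟩

lemma weight_pos {D : Type} [Fintype D] [DecidableEq D] (Φ : MLN V) (ω : Interp V D) :
    0 < weight Φ ω :=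
  Real.exp_pos _

lemma Zpart_pos (Φ : MLN V) (N : ℕ) : 0 < Zpart Φ N :=
  sum_pos (fun ω _ => weight_pos Φ ω) univ_nonempty

lemma wmin_le_kweight (Φ : MLN V) (k : ℕ) (ν : Interp V (Fin k)) : wmin Φ k ≤ kweight Φ k ν :=
  ciInf_le (Finite.bddBelow_range _) ν

lemma kweight_le_wmax (Φ : MLN V) (k : ℕ) (ν : Interp V (Fin k)) : kweight Φ k ν ≤ wmax Φ k :=
  le_ciSup (Finite.bddAbove_range _) ν

lemma wmin_pos (Φ : MLN V) (k : ℕ) : 0 < wmin Φ k := by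
  obtain ⟨ν, hν⟩ := Finite.exists_min (kweight Φ k)
  exact (Real.exp_pos _).trans_le (le_ciInf hν)

lemma Mmin_pos (Φ : MLN V) (d n m : ℕ) : 0 < Mmin Φ d n m :=
  prod_pos fun k _ => pow_pos (wmin_pos Φ k) _

lemma downset_map {M N k : ℕ} (e : Fin M ↪o Fin N) (ω : Interp V (Fin N)) (T : Finset (Fin M))
    (h : (T.map e.toEmbedding).card = k) (h' : T.card = k) :
    downset ω (T.map e.toEmbedding) h = downset (restrict e ω) T h' := by
  have hsort : (T.map e.toEmbedding).orderEmbOfFin h = (T.orderEmbOfFin h').trans e :=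
    (orderEmbOfFin_unique' h fun i => mem_map_of_mem _ (orderEmbOfFin_mem T h' i)).symm
  funext r t
  simp only [downset, restrict, coe_orderIsoOfFin_apply, hsort]
  rfl

lemma card_groundings_with_image (φ : Formula V) {N : ℕ} (ω : Interp V (Fin N))
    (T : Finset (Fin N)) (hT : T.card = φ.arity) :
    #{c : Fin φ.arity ↪ Fin N | φ.sat (restrict c ω) = true ∧ univ.map c = T} =
      nGround φ (downset ω T hT) := by
  set OE := T.orderEmbOfFin hT
  rw [nGround, Fintype.card_subtype, eq_comm]
  refine card_bij (fun e _ => e.trans OE.toEmbedding) ?_ ?_ ?_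
  · intro e he
    have he_univ : univ.map e = univ :=
      map_univ_of_surjective (Finite.surjective_of_injective e.injective)
    refine mem_filter.2 ⟨mem_univ _, ?_, ?_⟩
    · exact (mem_filter.1 he).2
    · rw [← map_map, he_univ, map_orderEmbOfFin_univ]
  · intro e₁ _ e₂ _ h
    ext j
    exact congrArg Fin.val (OE.injective (DFunLike.congr_fun h j))
  · intro c hc
    obtain ⟨-, hsat, himage⟩ := mem_filter.1 hc
    have hmem : ∀ j, c j ∈ Set.range OE := fun j => by
      rw [range_orderEmbOfFin, ← himage]; simp
    set e : Fin φ.arity → Fin φ.arity := fun j => OE.toEmbedding.invOfMemRange ⟨c j, hmem j⟩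
    have hOe : ∀ j, OE (e j) = c j := fun j => OE.toEmbedding.left_inv_of_invOfMemRange _
    have he : Function.Injective e := fun a b hab => c.injective (by rw [← hOe, ← hOe, hab])
    have hc : (⟨e, he⟩ : Fin φ.arity ↪ Fin φ.arity).trans OE.toEmbedding = c := by
      ext j; exact congrArg Fin.val (hOe j)
    refine ⟨⟨e, he⟩, mem_filter.2 ⟨mem_univ _, ?_⟩, hc⟩
    rw [← hc] at hsat
    exact hsat

lemma nGround_eq_sum_downset (φ : Formula V) {N : ℕ} (ω : Interp V (Fin N)) :
    nGround φ ω = ∑ T ∈ powersetCard φ.arity univ,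
      if h : T.card = φ.arity then nGround φ (downset ω T h) else 0 := by
  rw [nGround, Fintype.card_subtype,
    card_eq_sum_card_fiberwise (f := fun c => univ.map c) (t := powersetCard φ.arity univ)
      (fun c _ => by simp [mem_powersetCard])]
  refine sum_congr rfl fun T hT => ?_
  rw [dif_pos (mem_powersetCard.1 hT).2, ← card_groundings_with_image, filter_filter]

lemma List.sum_map_eq_sum_filter_eq {α M : Type*} [AddCommMonoid M] (l : List α) (g : α → ℕ)
    (s : Finset ℕ) (hs : ∀ a ∈ l, g a ∈ s) (f : α → M) :
    (l.map f).sum = ∑ k ∈ s, ((l.filter fun a => g a == k).map f).sum := by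
  induction l with
  | nil => simp
  | cons a l ih =>
    have hcons : ∀ k, (((a :: l).filter fun b => g b == k).map f).sum =
        (if g a = k then f a else 0) + ((l.filter fun b => g b == k).map f).sum := fun k => by
      by_cases h : g a = k <;> simp [h]
    rw [List.map_cons, List.sum_cons, ih fun b hb => hs b (List.mem_cons_of_mem a hb)]
    simp only [hcons, sum_add_distrib, sum_ite_eq, if_pos (hs a List.mem_cons_self)]

lemma List.sum_map_sum_comm {α β M : Type*} [AddCommMonoid M] (l : List α) (s : Finset β)
    (f : α → β → M) :
    (l.map fun a => ∑ b ∈ s, f a b).sum = ∑ b ∈ s, (l.map fun a => f a b).sum := by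
  induction l with
  | nil => simp
  | cons a l ih => simp [ih, sum_add_distrib]

noncomputable def localWeight (Φ : MLN V) (k : ℕ) {N : ℕ} (ω : Interp V (Fin N))
    (T : Finset (Fin N)) : ℝ :=
  if h : T.card = k then kweight Φ k (downset ω T h) else 1

lemma localWeight_pos (Φ : MLN V) (k : ℕ) {N : ℕ} (ω : Interp V (Fin N)) (T : Finset (Fin N)) :
    0 < localWeight Φ k ω T := by
  unfold localWeight; split_ifs
  exacts [Real.exp_pos _, one_pos]

lemma localWeight_mem_Icc (Φ : MLN V) {k N : ℕ} (ω : Interp V (Fin N)) {T : Finset (Fin N)}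
    (hT : T.card = k) : localWeight Φ k ω T ∈ Set.Icc (wmin Φ k) (wmax Φ k) := by
  rw [localWeight, dif_pos hT]
  exact ⟨wmin_le_kweight Φ k _, kweight_le_wmax Φ k _⟩

lemma weight_eq_prod_localWeight (Φ : MLN V) (s : Finset ℕ)
    (hs : ∀ p ∈ Φ.formulas, p.1.arity ∈ s) {N : ℕ} (ω : Interp V (Fin N)) :
    weight Φ ω = ∏ k ∈ s, ∏ T ∈ powersetCard k univ, localWeight Φ k ω T := by
  have hlocal : ∀ k (T : Finset (Fin N)), localWeight Φ k ω T = Real.exp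
      ((Φ.formulas.filter fun p => p.1.arity == k).map fun p =>
        p.2 * if h : T.card = k then (nGround p.1 (downset ω T h) : ℝ) else 0).sum := by
    intro k T
    unfold localWeight
    split_ifs <;> simp [kweight]
  simp_rw [hlocal, ← Real.exp_sum]
  rw [weight, List.sum_map_eq_sum_filter_eq Φ.formulas (·.1.arity) s hs]
  refine congrArg Real.exp (sum_congr rfl fun k _ => ?_)
  rw [← List.sum_map_sum_comm]
  refine congrArg List.sum (List.map_congr_left fun p hp => ?_)
  have hk : p.1.arity = k := by simpa using (List.mem_filter.1 hp).2
  subst hk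
  rw [← mul_sum, nGround_eq_sum_downset p.1 ω]
  push_cast [apply_dite]
  rfl

lemma prod_powersetCard_map_localWeight (Φ : MLN V) (k : ℕ) {M N : ℕ} (e : Fin M ↪o Fin N)
    (ω : Interp V (Fin N)) :
    ∏ T ∈ powersetCard k (univ.map e.toEmbedding), localWeight Φ k ω T =
      ∏ T ∈ powersetCard k univ, localWeight Φ k (restrict e ω) T := by
  rw [powersetCard_map, prod_map]
  refine prod_congr rfl fun T hT => ?_
  have hT : T.card = k := (mem_powersetCard.1 hT).2
  have hmap : (T.map e.toEmbedding).card = k := by rw [card_map, hT]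
  simp only [RelEmbedding.coe_toEmbedding, mapEmbedding_apply]
  rw [localWeight, localWeight, dif_pos hmap, dif_pos hT, downset_map e ω T hmap hT]

lemma disjoint_castAdd_natAdd (n m : ℕ) :
    Disjoint (univ.map (Fin.castAddOrderEmb m).toEmbedding)
      (univ.map (Fin.natAddOrderEmb n).toEmbedding : Finset (Fin (n + m))) := by
  simp only [disjoint_left, mem_map, mem_univ, true_and, not_exists, forall_exists_index,
    forall_apply_eq_imp_iff, Fin.castAddOrderEmb_toEmbedding, Fin.natAddOrderEmb_toEmbedding]
  intro i j h
  have hval : n + (j : ℕ) = i := congrArg Fin.val h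
  omega

def crossingSubsets (n m k : ℕ) : Finset (Finset (Fin (n + m))) :=
  powersetCard k univ \ (powersetCard k (univ.map (Fin.castAddOrderEmb m).toEmbedding) ∪
    powersetCard k (univ.map (Fin.natAddOrderEmb n).toEmbedding))

lemma disjoint_powersetCard_castAdd_natAdd {n m k : ℕ} (hk : k ≠ 0) :
    Disjoint (powersetCard k (univ.map (Fin.castAddOrderEmb m).toEmbedding))
      (powersetCard k (univ.map (Fin.natAddOrderEmb n).toEmbedding)) := by
  refine disjoint_left.2 fun T hA hB => hk ?_
  rw [mem_powersetCard] at hA hB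
  rw [← hA.2, card_eq_zero, ← disjoint_self_iff_empty]
  exact (disjoint_castAdd_natAdd n m).mono hA.1 hB.1

lemma union_powersetCard_subset (n m k : ℕ) :
    powersetCard k (univ.map (Fin.castAddOrderEmb m).toEmbedding) ∪
      powersetCard k (univ.map (Fin.natAddOrderEmb n).toEmbedding) ⊆ powersetCard k univ :=
  union_subset (powersetCard_mono (subset_univ _)) (powersetCard_mono (subset_univ _))

lemma card_crossingSubsets {n m k : ℕ} (hk : k ≠ 0) :
    #(crossingSubsets n m k) = exponent n m k := by
  rw [crossingSubsets, card_sdiff_of_subset (union_powersetCard_subset n m k),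
    card_union_of_disjoint (disjoint_powersetCard_castAdd_natAdd hk)]
  simp [exponent, Nat.sub_sub]

lemma prod_powersetCard_eq_mul_prod_crossingSubsets {β : Type*} [CommMonoid β] {n m k : ℕ}
    (hk : k ≠ 0) (f : Finset (Fin (n + m)) → β) :
    ∏ T ∈ powersetCard k univ, f T =
      (∏ T ∈ powersetCard k (univ.map (Fin.castAddOrderEmb m).toEmbedding), f T) *
        (∏ T ∈ powersetCard k (univ.map (Fin.natAddOrderEmb n).toEmbedding), f T) *
          ∏ T ∈ crossingSubsets n m k, f T := by
  rw [crossingSubsets, ← prod_sdiff (union_powersetCard_subset n m k),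
    prod_union (disjoint_powersetCard_castAdd_natAdd hk), mul_comm]

lemma weight_eq_mul_prod_crossingSubsets (Φ : MLN V) (d : ℕ)
    (hd : ∀ p ∈ Φ.formulas, 1 ≤ p.1.arity ∧ p.1.arity ≤ d) {n m : ℕ}
    (ω : Interp V (Fin (n + m))) :
    weight Φ ω = weight Φ (restrict (Fin.castAdd m) ω) * weight Φ (restrict (Fin.natAdd n) ω) *
      ∏ k ∈ Icc 1 d, ∏ T ∈ crossingSubsets n m k, localWeight Φ k ω T := by
  have hs : ∀ p ∈ Φ.formulas, p.1.arity ∈ Icc 1 d := fun p hp => mem_Icc.2 (hd p hp)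
  rw [weight_eq_prod_localWeight Φ _ hs, weight_eq_prod_localWeight Φ _ hs,
    weight_eq_prod_localWeight Φ _ hs, ← prod_mul_distrib, ← prod_mul_distrib]
  refine prod_congr rfl fun k hk => ?_
  rw [prod_powersetCard_eq_mul_prod_crossingSubsets (Nat.one_le_iff_ne_zero.1 (mem_Icc.1 hk).1),
    prod_powersetCard_map_localWeight, prod_powersetCard_map_localWeight]
  rfl

lemma prod_crossingSubsets_localWeight_mem_Icc (Φ : MLN V) (d : ℕ) {n m : ℕ}
    (ω : Interp V (Fin (n + m))) :
    ∏ k ∈ Icc 1 d, ∏ T ∈ crossingSubsets n m k, localWeight Φ k ω T ∈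
      Set.Icc (Mmin Φ d n m) (Mmax Φ d n m) := by
  have hcard : ∀ k ∈ Icc 1 d, exponent n m k = #(crossingSubsets n m k) := fun k hk =>
    (card_crossingSubsets (Nat.one_le_iff_ne_zero.1 (mem_Icc.1 hk).1)).symm
  have hmem : ∀ {k} {T}, T ∈ crossingSubsets n m k →
      localWeight Φ k ω T ∈ Set.Icc (wmin Φ k) (wmax Φ k) := fun hT =>
    localWeight_mem_Icc Φ ω (mem_powersetCard.1 (mem_sdiff.1 hT).1).2
  constructor
  · refine prod_le_prod (fun k _ => pow_nonneg (wmin_pos Φ k).le _) fun k hk => ?_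
    rw [hcard k hk, ← prod_const]
    exact prod_le_prod (fun _ _ => (wmin_pos Φ k).le) fun T hT => (hmem hT).1
  · refine prod_le_prod (fun k _ => prod_nonneg fun T _ => (localWeight_pos Φ k ω T).le)
      fun k hk => ?_
    rw [hcard k hk, ← prod_const]
    exact prod_le_prod (fun T _ => (localWeight_pos Φ k ω T).le) fun T hT => (hmem hT).2

lemma weight_mem_Icc (Φ : MLN V) (d : ℕ)
    (hd : ∀ p ∈ Φ.formulas, 1 ≤ p.1.arity ∧ p.1.arity ≤ d) {n m : ℕ}
    (ω : Interp V (Fin (n + m))) :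
    weight Φ ω ∈ Set.Icc
      (weight Φ (restrict (Fin.castAdd m) ω) * weight Φ (restrict (Fin.natAdd n) ω) * Mmin Φ d n m)
      (weight Φ (restrict (Fin.castAdd m) ω) * weight Φ (restrict (Fin.natAdd n) ω) *
        Mmax Φ d n m) := by
  have hLR := mul_pos (weight_pos Φ (restrict (Fin.castAdd m) ω))
    (weight_pos Φ (restrict (Fin.natAdd n) ω))
  obtain ⟨hlo, hhi⟩ := prod_crossingSubsets_localWeight_mem_Icc Φ d ω
  rw [weight_eq_mul_prod_crossingSubsets Φ d hd ω]
  exact ⟨mul_le_mul_of_nonneg_left hlo hLR.le, mul_le_mul_of_nonneg_left hhi hLR.le⟩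

noncomputable def extensionWeight (Φ : MLN V) (m : ℕ) {n : ℕ} (ω : Interp V (Fin n)) : ℝ :=
  ∑ ω' ∈ univ.filter (fun ω' : Interp V (Fin (n + m)) => restrict (Fin.castAdd m) ω' = ω),
    weight Φ ω'

def ExtensionCountEq (V : Vocab) (n m C : ℕ) : Prop :=
  ∀ (ω₁ : Interp V (Fin n)) (ω₂ : Interp V (Fin m)),
    Fintype.card {ω : Interp V (Fin (n + m)) //
      restrict (Fin.castAdd m) ω = ω₁ ∧ restrict (Fin.natAdd n) ω = ω₂} = C

section ExtensionCount

variable {n m C : ℕ}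

lemma ExtensionCountEq.pos (hC : ExtensionCountEq V n m C) : 0 < C := by
  let ω : Interp V (Fin (n + m)) := fun _ _ => true
  rw [← hC (restrict (Fin.castAdd m) ω) (restrict (Fin.natAdd n) ω)]
  exact Fintype.card_pos_iff.2 ⟨⟨ω, rfl, rfl⟩⟩

lemma sum_weight_fiber_mem_Icc (Φ : MLN V) (d : ℕ)
    (hd : ∀ p ∈ Φ.formulas, 1 ≤ p.1.arity ∧ p.1.arity ≤ d) (hC : ExtensionCountEq V n m C)
    (ω₁ : Interp V (Fin n)) (ω₂ : Interp V (Fin m)) :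
    ∑ ω ∈ univ.filter (fun ω : Interp V (Fin (n + m)) =>
        restrict (Fin.castAdd m) ω = ω₁ ∧ restrict (Fin.natAdd n) ω = ω₂), weight Φ ω ∈
      Set.Icc (C * (weight Φ ω₁ * weight Φ ω₂ * Mmin Φ d n m))
        (C * (weight Φ ω₁ * weight Φ ω₂ * Mmax Φ d n m)) := by
  have hcard : #(univ.filter fun ω : Interp V (Fin (n + m)) =>
      restrict (Fin.castAdd m) ω = ω₁ ∧ restrict (Fin.natAdd n) ω = ω₂) = C := by
    rw [← Fintype.card_subtype, hC]
  have hbound : ∀ ω ∈ univ.filter (fun ω : Interp V (Fin (n + m)) =>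
      restrict (Fin.castAdd m) ω = ω₁ ∧ restrict (Fin.natAdd n) ω = ω₂),
      weight Φ ω ∈ Set.Icc (weight Φ ω₁ * weight Φ ω₂ * Mmin Φ d n m)
        (weight Φ ω₁ * weight Φ ω₂ * Mmax Φ d n m) := by
    intro ω hω
    obtain ⟨-, rfl, rfl⟩ := mem_filter.1 hω
    exact weight_mem_Icc Φ d hd ω
  have hlo := card_nsmul_le_sum _ _ _ fun ω hω => (hbound ω hω).1
  have hhi := sum_le_card_nsmul _ _ _ fun ω hω => (hbound ω hω).2
  rw [hcard, nsmul_eq_mul] at hlo hhi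
  exact ⟨hlo, hhi⟩

lemma extensionWeight_mem_Icc (Φ : MLN V) (d : ℕ)
    (hd : ∀ p ∈ Φ.formulas, 1 ≤ p.1.arity ∧ p.1.arity ≤ d) (hC : ExtensionCountEq V n m C)
    (ω : Interp V (Fin n)) :
    extensionWeight Φ m ω ∈ Set.Icc (C * Zpart Φ m * weight Φ ω * Mmin Φ d n m)
      (C * Zpart Φ m * weight Φ ω * Mmax Φ d n m) := by
  have hfib : extensionWeight Φ m ω = ∑ ω₂ : Interp V (Fin m),
      ∑ ω' ∈ univ.filter (fun ω' : Interp V (Fin (n + m)) =>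
        restrict (Fin.castAdd m) ω' = ω ∧ restrict (Fin.natAdd n) ω' = ω₂), weight Φ ω' := by
    rw [extensionWeight, ← sum_fiberwise _ (restrict (Fin.natAdd n))]
    simp only [filter_filter]
  have hsum : ∀ M : ℝ, ∑ ω₂ : Interp V (Fin m), C * (weight Φ ω * weight Φ ω₂ * M) =
      C * Zpart Φ m * weight Φ ω * M := fun M => by
    simp only [Zpart, mul_sum, sum_mul]
    exact sum_congr rfl fun _ _ => by ring
  rw [hfib, ← hsum, ← hsum]
  exact ⟨sum_le_sum fun ω₂ _ => (sum_weight_fiber_mem_Icc Φ d hd hC ω ω₂).1,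
    sum_le_sum fun ω₂ _ => (sum_weight_fiber_mem_Icc Φ d hd hC ω ω₂).2⟩

lemma Zpart_add_mem_Icc (Φ : MLN V) (d : ℕ)
    (hd : ∀ p ∈ Φ.formulas, 1 ≤ p.1.arity ∧ p.1.arity ≤ d) (hC : ExtensionCountEq V n m C) :
    Zpart Φ (n + m) ∈ Set.Icc (Zpart Φ n * Zpart Φ m * C * Mmin Φ d n m)
      (Zpart Φ n * Zpart Φ m * C * Mmax Φ d n m) := by
  have hfib : Zpart Φ (n + m) = ∑ ω : Interp V (Fin n), extensionWeight Φ m ω :=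
    (sum_fiberwise _ (restrict (Fin.castAdd m)) _).symm
  have hsum : ∀ M : ℝ, ∑ ω : Interp V (Fin n), C * Zpart Φ m * weight Φ ω * M =
      Zpart Φ n * Zpart Φ m * C * M := fun M => by
    rw [← sum_mul, ← mul_sum, show ∑ ω : Interp V (Fin n), weight Φ ω = Zpart Φ n from rfl]
    ring
  rw [hfib, ← hsum, ← hsum]
  exact ⟨sum_le_sum fun ω _ => (extensionWeight_mem_Icc Φ d hd hC ω).1,
    sum_le_sum fun ω _ => (extensionWeight_mem_Icc Φ d hd hC ω).2⟩

end ExtensionCount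

lemma marg_eq_extensionWeight_div (Φ : MLN V) (n m : ℕ) (ω : Interp V (Fin n)) :
    marg Φ n m ω = extensionWeight Φ m ω / Zpart Φ (n + m) := by
  rw [extensionWeight, sum_div]
  rfl

lemma div_mem_Icc_of_mem_Icc_mul {x D lo hi : ℝ} (hD : 0 < D)
    (h : x ∈ Set.Icc (D * lo) (D * hi)) :
    x / D ∈ Set.Icc lo hi :=
  ⟨(le_div_iff₀' hD).2 h.1, (div_le_iff₀' hD).2 h.2⟩

/-- exact log-likelihood decomposition. For any `ω ∈ Ω^(n)`,
`−log P_Φ^(n+m)↓[n](ω) = −log P_Φ^(n)(ω) + log(Z(n+m)/(Z(n)·Z(m)·C)) −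
 log((1/(C·Z(m))) ∑_{ω'↓[n]=ω} w(ω')/w(ω))`, where the middle term lies in
`[log M_min, log M_max]` and the last log's argument lies in `[M_min, M_max]`. -/
theorem log_likelihood_decomposition {V : Vocab} (Φ : MLN V) (d n m : ℕ)
    (hd : ∀ p ∈ Φ.formulas, 1 ≤ p.1.arity ∧ p.1.arity ≤ d)
    (C : ℕ)
    (hC : ∀ (ω₁ : Interp V (Fin n)) (ω₂ : Interp V (Fin m)),
      Fintype.card {ω : Interp V (Fin (n + m)) //
        restrict (Fin.castAdd m) ω = ω₁ ∧ restrict (Fin.natAdd n) ω = ω₂} = C)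
    (ω : Interp V (Fin n)) :
    -Real.log (marg Φ n m ω) =
      -Real.log (Pdist Φ n ω) +
        Real.log (Zpart Φ (n + m) / (Zpart Φ n * Zpart Φ m * (C : ℝ))) -
        Real.log ((1 / ((C : ℝ) * Zpart Φ m)) *
          ∑ ω' ∈ Finset.univ.filter
              (fun ω' : Interp V (Fin (n + m)) => restrict (Fin.castAdd m) ω' = ω),
            weight Φ ω' / weight Φ ω) ∧
    Real.log (Zpart Φ (n + m) / (Zpart Φ n * Zpart Φ m * (C : ℝ))) ∈
      Set.Icc (Real.log (Mmin Φ d n m)) (Real.log (Mmax Φ d n m)) ∧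
    ((1 / ((C : ℝ) * Zpart Φ m)) *
        ∑ ω' ∈ Finset.univ.filter
            (fun ω' : Interp V (Fin (n + m)) => restrict (Fin.castAdd m) ω' = ω),
          weight Φ ω' / weight Φ ω) ∈
      Set.Icc (Mmin Φ d n m) (Mmax Φ d n m) := by
  have hC0 : (0 : ℝ) < C := Nat.cast_pos.2 (ExtensionCountEq.pos hC)
  have hZ := Zpart_pos Φ (n + m)
  have hZn := Zpart_pos Φ n
  have hZm := Zpart_pos Φ m
  have hw := weight_pos Φ ω
  have hZratio : Zpart Φ (n + m) / (Zpart Φ n * Zpart Φ m * C) ∈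
      Set.Icc (Mmin Φ d n m) (Mmax Φ d n m) :=
    div_mem_Icc_of_mem_Icc_mul (by positivity) (Zpart_add_mem_Icc Φ d hd hC)
  have hSratio : extensionWeight Φ m ω / (C * Zpart Φ m * weight Φ ω) ∈
      Set.Icc (Mmin Φ d n m) (Mmax Φ d n m) :=
    div_mem_Icc_of_mem_Icc_mul (by positivity) (extensionWeight_mem_Icc Φ d hd hC ω)
  have hS : 0 < extensionWeight Φ m ω :=
    (div_pos_iff_of_pos_right (by positivity)).1 ((Mmin_pos Φ d n m).trans_le hSratio.1)
  have hsum : 1 / (C * Zpart Φ m) * ∑ ω' ∈ univ.filter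
      (fun ω' : Interp V (Fin (n + m)) => restrict (Fin.castAdd m) ω' = ω),
        weight Φ ω' / weight Φ ω = extensionWeight Φ m ω / (C * Zpart Φ m * weight Φ ω) := by
    rw [← sum_div, extensionWeight]
    ring
  rw [hsum, marg_eq_extensionWeight_div, Pdist]
  refine ⟨?_, ⟨Real.log_le_log (Mmin_pos Φ d n m) hZratio.1,
    Real.log_le_log ((Mmin_pos Φ d n m).trans_le hZratio.1) hZratio.2⟩, hSratio⟩
  rw [Real.log_div hS.ne' hZ.ne', Real.log_div hw.ne' hZn.ne', Real.log_div hZ.ne' (by positivity),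
    Real.log_div hS.ne' (by positivity), Real.log_mul (by positivity) hC0.ne',
    Real.log_mul hZn.ne' hZm.ne', Real.log_mul (by positivity) hw.ne', Real.log_mul hC0.ne' hZm.ne']
  ring
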